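/- Let k be a commutative ring of characteristic zero. Fix positive integers a_0 < a_1 < ⋯ < a_n, block sizes c_0, …, c_n ≥ 1, and let R := k[x_{ij} : 0 ≤ i ≤ n, 1 ≤ j ≤ c_i] be the polynomial ring graded by wt(x_{ij}) = a_i. Let d ≥ 0 and let V_d be a k-submodule of the weighted-homogeneous degree-d part of R satisfying the nondegeneracy hypothesis: for every quotient ring k' of k, every b > 0, and every k'-derivation ∂' of weight −b of the subring k'[x_{ij} : i ≥ 1] in the variables of weight > a_0, if ∂' vanishes on the image V'_d of V_d (reduce coefficients along k → k' and set all weight-a_0 variables x_{0j} to 0), then ∂' = 0. Then if ∂ and D are k-derivations of R of weights −b and −b' respectively, with b, b' > 0, and both vanish on V_d, the commutator [∂, D] = ∂∘D − D∘∂ is the zero derivation; in other words the Lie algebra L := ∐_{b>0} L_{−b}(V_d) is abelian and concentrated in weight −a_0. (Paper's assertion (2.18).) -/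

import Mathlib

/-- The index set of the variables `x_{ij}`, `0 ≤ i ≤ n`, `1 ≤ j ≤ c i`:
blocks `i = 0,…,n` of sizes `c i`. -/
abbrev BlockIdx (n : ℕ) (c : Fin (n + 1) → ℕ) : Type := (i : Fin (n + 1)) × Fin (c i)

/-- The weight of the variable `x_{ij}` is `a i`. -/
def blockWt {n : ℕ} {c : Fin (n + 1) → ℕ} (a : Fin (n + 1) → ℕ) (s : BlockIdx n c) : ℤ :=
  a s.1

/-- A derivation of a graded polynomial ring (weights `w`) has weight `-b` if each `∂ x_s` is
weighted homogeneous of degree `w s - b` (hence zero when `w s - b < 0`, since all weights are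
nonnegative). -/
def DerivationHasWt {k : Type*} [CommRing k] {τ : Type*} (w : τ → ℤ) (b : ℤ)
    (der : Derivation k (MvPolynomial τ k) (MvPolynomial τ k)) : Prop :=
  ∀ s : τ, MvPolynomial.IsWeightedHomogeneous w (der (MvPolynomial.X s)) (w s - b)

/-- The ring map `k[x_{ij}] → k'[x_{ij} : i ≥ 1]`, reducing coefficients along the quotient
`k → k' = k ⧸ J` and setting the weight-`a 0` variables `x_{0j}` to `0`. -/
noncomputable def restrictBlocks {k : Type*} [CommRing k] (n : ℕ) (c : Fin (n + 1) → ℕ)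
    (J : Ideal k) :
    MvPolynomial (BlockIdx n c) k →+*
      MvPolynomial {s : BlockIdx n c // s.1 ≠ 0} (k ⧸ J) :=
  (MvPolynomial.aeval fun s : BlockIdx n c =>
      if h : s.1 = 0 then 0 else MvPolynomial.X (⟨s, h⟩ : {s : BlockIdx n c // s.1 ≠ 0})
    ).toRingHom.comp (MvPolynomial.map (Ideal.Quotient.mk J))

/-! Let `E = ⁅∂, D⁆`; it has weight `-(b + b')` and kills `V_d`. Since every weight is at least
`a₀`, both `∂` and `D` send the weight-`a₀` variables `x_{0j}` to constants, so `E` kills them.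
Write `k[x] = k[x_{ij} : i ≥ 1][x_{0j}]`. By induction on `N`, every `E(x_{ij})` lies in
`(x_{0j})^N`: granted this for `N`, the coefficient of a monomial `x₀^α` with `|α| = N` defines a
derivation `E_α` of `k[x_{ij} : i ≥ 1]` of weight `-(b + b' + N a₀)`, and
`E_α(f|_{x₀ = 0}) = [x₀^α] E(f)` because the part of `f` of positive `x₀`-degree only
contributes to `E(f)` in `x₀`-degree `> N`. So `E_α` kills the image of `V_d`, and it vanishes
by nondegeneracy (applied with `k' = k`). -/

open MvPolynomial

namespace Finsupp

variable {α M : Type*}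

section Zero

variable [Zero M] {p : α → Prop} {i : α}

theorem subtypeDomain_single_of_pos (h : p i) (m : M) :
    (single i m).subtypeDomain p = single ⟨i, h⟩ m := by
  classical
  ext j
  simp only [subtypeDomain_apply, single_apply, Subtype.ext_iff]

theorem subtypeDomain_single_of_neg (h : ¬p i) (m : M) :
    (single i m).subtypeDomain p = 0 :=
  subtypeDomain_eq_zero_iff'.2 fun _ hj => single_eq_of_ne (by grind)

end Zero

variable [AddCommMonoid M]

theorem weight_eq_weight_subtypeDomain_add (w : α → M) (p : α → Prop) (d : α →₀ ℕ) :
    weight w d = weight (fun j : {j // p j} => w j) (d.subtypeDomain p)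
      + weight (fun j : {j // ¬p j} => w j) (d.subtypeDomain (¬p ·)) := by
  induction d using Finsupp.induction with
  | zero => simp
  | single_add i e d _ _ ih =>
    simp only [map_add, subtypeDomain_add, ih]
    by_cases h : p i
    · rw [subtypeDomain_single_of_pos h,
        subtypeDomain_single_of_neg (p := (¬p ·)) (not_not_intro h)]
      simp only [weight_single, map_zero]
      abel
    · rw [subtypeDomain_single_of_neg h, subtypeDomain_single_of_pos (p := (¬p ·)) h]
      simp only [weight_single, map_zero]
      abel

theorem weight_const (c : M) (d : α →₀ ℕ) :
    weight (fun _ => c) d = d.degree • c := by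
  rw [weight_apply, degree_apply, Finsupp.sum, Finset.sum_smul]

end Finsupp

namespace MvPolynomial

section General

variable {σ R : Type*} [CommRing R]

theorem IsWeightedHomogeneous.map {S M : Type*} [CommRing S] [AddCommMonoid M] {w : σ → M}
    {φ : MvPolynomial σ R} {m : M} (hφ : IsWeightedHomogeneous w φ m) (f : R →+* S) :
    IsWeightedHomogeneous w (map f φ) m := fun d hd =>
  hφ fun h => hd (by rw [coeff_map, h, map_zero])

theorem IsWeightedHomogeneous.eq_C_of_lt {w : σ → ℤ} {φ : MvPolynomial σ R} {m : ℤ}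
    (hφ : IsWeightedHomogeneous w φ m) (hw : ∀ i, 0 ≤ w i) (hm : ∀ i, m < w i) :
    φ = C (coeff 0 φ) := by
  classical
  ext d
  rw [coeff_C]
  split_ifs with hd
  · rw [hd]
  by_contra hφd
  obtain ⟨i, hi⟩ := Finsupp.support_nonempty_iff.2 (Ne.symm hd)
  have := Finsupp.le_weight_of_ne_zero hw (Finsupp.mem_support_iff.1 hi)
  linarith [hm i, hφ hφd]

theorem coeff_mul_of_mem_pow_idealOfVars {P Q : MvPolynomial σ R} {N : ℕ}
    (hQ : Q ∈ idealOfVars σ R ^ N) {α : σ →₀ ℕ} (hα : α.degree = N) :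
    coeff α (P * Q) = constantCoeff P * coeff α Q := by
  have hP : P - C (constantCoeff P) ∈ idealOfVars σ R := by
    rw [← pow_one (idealOfVars σ R), mem_pow_idealOfVars_iff']
    intro x hx
    rw [Nat.lt_one_iff, Finsupp.degree_eq_zero_iff] at hx
    simp [hx, constantCoeff_eq]
  have hrest : (P - C (constantCoeff P)) * Q ∈ idealOfVars σ R ^ (N + 1) := by
    rw [pow_succ']
    exact Ideal.mul_mem_mul hP hQ
  have := (mem_pow_idealOfVars_iff' _ _).1 hrest α (by omega)
  rwa [sub_mul, coeff_sub, coeff_C_mul, sub_eq_zero] at this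

theorem derivation_apply_mem_of_forall_X_mem
    {D : Derivation R (MvPolynomial σ R) (MvPolynomial σ R)} {I : Ideal (MvPolynomial σ R)}
    (hD : ∀ i, D (X i) ∈ I) (f : MvPolynomial σ R) : D f ∈ I := by
  induction f using MvPolynomial.induction_on with
  | C r => simp
  | add f g hf hg => simpa using I.add_mem hf hg
  | mul_X f i hf =>
    rw [Derivation.leibniz, smul_eq_mul, smul_eq_mul]
    exact I.add_mem (I.mul_mem_left _ (hD i)) (I.mul_mem_left _ hf)

end General

section SplitVars

variable {ι : Type*} (p : ι → Prop) [DecidablePred p] (k : Type*) [CommRing k]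

noncomputable def splitVars :
    MvPolynomial ι k ≃ₐ[k] MvPolynomial {i // p i} (MvPolynomial {i // ¬p i} k) :=
  (renameEquiv k (Equiv.sumCompl p).symm).trans (sumAlgEquiv k _ _)

variable {p k}

@[simp]
theorem splitVars_C (r : k) : splitVars p k (C r) = C (C r) := by
  simp [splitVars]

theorem splitVars_X_of_pos {i : ι} (h : p i) : splitVars p k (X i) = X ⟨i, h⟩ := by
  simp [splitVars, Equiv.sumCompl_symm_apply_of_pos h]

theorem splitVars_X_of_neg {i : ι} (h : ¬p i) : splitVars p k (X i) = C (X ⟨i, h⟩) := by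
  simp [splitVars, Equiv.sumCompl_symm_apply_of_neg h]

theorem splitVars_monomial (d : ι →₀ ℕ) (r : k) :
    splitVars p k (monomial d r) =
      monomial (d.subtypeDomain p) (monomial (d.subtypeDomain (¬p ·)) r) := by
  induction d using Finsupp.induction with
  | zero => simp
  | single_add i e d _ _ ih =>
    rw [monomial_single_add, map_mul, map_pow, ih, Finsupp.subtypeDomain_add,
      Finsupp.subtypeDomain_add]
    by_cases h : p i
    · rw [splitVars_X_of_pos h, Finsupp.subtypeDomain_single_of_pos h,
        Finsupp.subtypeDomain_single_of_neg (p := (¬p ·)) (not_not_intro h), zero_add,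
        monomial_single_add]
    · rw [splitVars_X_of_neg h, Finsupp.subtypeDomain_single_of_neg h,
        Finsupp.subtypeDomain_single_of_pos (p := (¬p ·)) h, zero_add, monomial_single_add,
        ← map_pow, C_mul_monomial]

theorem IsWeightedHomogeneous.coeff_splitVars {M : Type*} [AddCommGroup M] {w : ι → M}
    {f : MvPolynomial ι k} {m : M} (hf : IsWeightedHomogeneous w f m) (α : {i // p i} →₀ ℕ) :
    IsWeightedHomogeneous (fun t : {i // ¬p i} => w t) (coeff α (splitVars p k f))
      (m - Finsupp.weight (fun z : {i // p i} => w z) α) := by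
  classical
  induction hf using IsWeightedHomogeneous.induction_on with
  | zero => simpa using isWeightedHomogeneous_zero k _ _
  | add f g _ _ hf hg => simpa using hf.add hg
  | monomial d r hd =>
    rw [splitVars_monomial, coeff_monomial]
    split_ifs with hα
    · apply isWeightedHomogeneous_monomial
      rw [← hd, Finsupp.weight_eq_weight_subtypeDomain_add w p, hα]
      abel
    · exact isWeightedHomogeneous_zero k _ _

end SplitVars

end MvPolynomial

namespace DerivationHasWt

variable {k : Type*} [CommRing k] {τ : Type*} {w : τ → ℤ} {b b' : ℤ}
  {D D₁ D₂ : Derivation k (MvPolynomial τ k) (MvPolynomial τ k)}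

theorem isWeightedHomogeneous_apply (hD : DerivationHasWt w b D) {f : MvPolynomial τ k} {m : ℤ}
    (hf : IsWeightedHomogeneous w f m) : IsWeightedHomogeneous w (D f) (m - b) := by
  induction hf using IsWeightedHomogeneous.induction_on with
  | zero => simpa using isWeightedHomogeneous_zero k w _
  | add f g _ _ hf hg => simpa using hf.add hg
  | monomial d r hd =>
    have hD' : D = mkDerivation k fun i => D (X i) := derivation_ext fun i => by simp
    rw [hD', mkDerivation_monomial, Finsupp.sum, Finset.smul_sum]
    refine IsWeightedHomogeneous.sum _ _ _ fun i hi => ?_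
    rw [smul_eq_mul, smul_eq_C_mul]
    convert ((isWeightedHomogeneous_monomial w _ _ rfl).mul (hD i)).C_mul r using 1
    rw [← hd, ← Finsupp.weight_sub_single_add (Finsupp.mem_support_iff.1 hi)]
    ring

theorem lie (h₁ : DerivationHasWt w b D₁) (h₂ : DerivationHasWt w b' D₂) :
    DerivationHasWt w (b + b') ⁅D₁, D₂⁆ := by
  intro i
  rw [Derivation.commutator_apply, show w i - (b + b') = w i - b' - b by ring]
  refine (h₁.isWeightedHomogeneous_apply (h₂ i)).sub ?_
  convert h₂.isWeightedHomogeneous_apply (h₁ i) using 1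
  ring

theorem apply_X_eq_C (hD : DerivationHasWt w b D) (hb : 0 < b) (hw : ∀ j, 0 ≤ w j) {i : τ}
    (hi : ∀ j, w i ≤ w j) : D (X i) = C (coeff 0 (D (X i))) :=
  (hD i).eq_C_of_lt hw fun j => by linarith [hi j]

theorem lie_apply_X_eq_zero (h₁ : DerivationHasWt w b D₁) (h₂ : DerivationHasWt w b' D₂)
    (hb : 0 < b) (hb' : 0 < b') (hw : ∀ j, 0 ≤ w j) {i : τ} (hi : ∀ j, w i ≤ w j) :
    ⁅D₁, D₂⁆ (X i) = 0 := by
  rw [Derivation.commutator_apply, h₁.apply_X_eq_C hb hw hi, h₂.apply_X_eq_C hb' hw hi]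
  simp

end DerivationHasWt

namespace MvPolynomial

variable {ι : Type*} {p : ι → Prop} [DecidablePred p] {k k' : Type*} [CommRing k] [CommRing k']
  (q : k →+* k') {E : Derivation k (MvPolynomial ι k) (MvPolynomial ι k)}

noncomputable def coeffDerivation (E : Derivation k (MvPolynomial ι k) (MvPolynomial ι k))
    (α : {i // p i} →₀ ℕ) :
    Derivation k' (MvPolynomial {i // ¬p i} k') (MvPolynomial {i // ¬p i} k') :=
  mkDerivation k' fun t => map q (coeff α (splitVars p k (E (X t.1))))

theorem coeffDerivation_map_constantCoeff {N : ℕ} (hlow : ∀ i, p i → E (X i) = 0)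
    (hE : ∀ i, splitVars p k (E (X i)) ∈ idealOfVars _ _ ^ N) {α : {i // p i} →₀ ℕ}
    (hα : α.degree = N) (f : MvPolynomial ι k) :
    coeffDerivation q E α (map q (constantCoeff (splitVars p k f)))
      = map q (coeff α (splitVars p k (E f))) := by
  have hX : ∀ i, coeffDerivation q E α (map q (constantCoeff (splitVars p k (X i))))
      = map q (coeff α (splitVars p k (E (X i)))) := by
    intro i
    by_cases h : p i
    · simp [splitVars_X_of_pos h, hlow i h]
    · simp [splitVars_X_of_neg h, coeffDerivation]
  have hEf : ∀ f, splitVars p k (E f) ∈ idealOfVars _ _ ^ N := fun f =>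
    derivation_apply_mem_of_forall_X_mem (I := (idealOfVars _ _ ^ N).comap (splitVars p k)) hE f
  induction f using MvPolynomial.induction_on with
  | C r => simp
  | add f g hf hg => simp only [map_add, coeff_add, hf, hg]
  | mul_X f i ih =>
    rw [map_mul, map_mul, map_mul, Derivation.leibniz, Derivation.leibniz, ih, hX]
    simp only [smul_eq_mul, map_add, map_mul, coeff_add]
    rw [coeff_mul_of_mem_pow_idealOfVars (hEf _) hα, coeff_mul_of_mem_pow_idealOfVars (hEf _) hα,
      map_mul, map_mul]

theorem derivationHasWt_coeffDerivation {w : ι → ℤ} {e w₀ : ℕ} (hw₀ : ∀ i, p i → w i = w₀)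
    (hE : DerivationHasWt w e E) (α : {i // p i} →₀ ℕ) :
    DerivationHasWt (fun t : {i // ¬p i} => w t) ((e + α.degree * w₀ : ℕ) : ℤ)
      (coeffDerivation q E α) := by
  intro t
  have hwα : Finsupp.weight (fun z : {i // p i} => w z) α = α.degree * (w₀ : ℤ) := by
    rw [← nsmul_eq_mul, ← Finsupp.weight_const]
    exact congrArg (Finsupp.weight · α) (_root_.funext fun z : {i // p i} => hw₀ z.1 z.2)
  have h := ((hE t).coeff_splitVars α).map q
  rw [hwα, sub_sub, ← Nat.cast_mul, ← Nat.cast_add] at h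
  rwa [coeffDerivation, mkDerivation_X]

variable (p) in
def NondegenerateRestriction (w : ι → ℤ) (S : Set (MvPolynomial ι k)) : Prop :=
  ∀ b : ℕ, 0 < b →
    ∀ G : Derivation k' (MvPolynomial {i // ¬p i} k') (MvPolynomial {i // ¬p i} k'),
      DerivationHasWt (fun t : {i // ¬p i} => w t) b G →
      (∀ f ∈ S, G (map q (constantCoeff (splitVars p k f))) = 0) → G = 0

variable {w : ι → ℤ} {S : Set (MvPolynomial ι k)} {e w₀ : ℕ}

theorem splitVars_apply_X_mem_pow_succ (hq : Function.Injective q)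
    (hS : NondegenerateRestriction p q w S) (hw₀ : ∀ i, p i → w i = w₀) (he : 0 < e)
    (hEwt : DerivationHasWt w e E) (hlow : ∀ i, p i → E (X i) = 0) (hES : ∀ f ∈ S, E f = 0)
    {N : ℕ} (hN : ∀ i, splitVars p k (E (X i)) ∈ idealOfVars _ _ ^ N) (i : ι) :
    splitVars p k (E (X i)) ∈ idealOfVars _ _ ^ (N + 1) := by
  rw [mem_pow_idealOfVars_iff']
  intro α hα
  obtain hlt | rfl := Nat.lt_succ_iff_lt_or_eq.1 hα
  · exact (mem_pow_idealOfVars_iff' _ _).1 (hN i) α hlt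
  have hG : coeffDerivation q E α = 0 :=
    hS _ (by positivity) _ (derivationHasWt_coeffDerivation q hw₀ hEwt α) fun f hf => by
      rw [coeffDerivation_map_constantCoeff q hlow hN rfl, hES f hf, map_zero, coeff_zero,
        map_zero]
  by_cases h : p i
  · simp [hlow i h]
  · have := congr($hG (X ⟨i, h⟩))
    rw [coeffDerivation, mkDerivation_X, Derivation.zero_apply] at this
    exact map_injective q hq (this.trans (map_zero (map q)).symm)

theorem _root_.DerivationHasWt.eq_zero_of_nondegenerateRestriction (hq : Function.Injective q)
    (hS : NondegenerateRestriction p q w S) (hw₀ : ∀ i, p i → w i = w₀) (he : 0 < e)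
    (hEwt : DerivationHasWt w e E) (hlow : ∀ i, p i → E (X i) = 0) (hES : ∀ f ∈ S, E f = 0) :
    E = 0 := by
  have hmem : ∀ N i, splitVars p k (E (X i)) ∈ idealOfVars _ _ ^ N := by
    intro N
    induction N with
    | zero => simp
    | succ N ih => exact splitVars_apply_X_mem_pow_succ q hq hS hw₀ he hEwt hlow hES ih
  refine derivation_ext fun i => (splitVars p k).injective ?_
  refine MvPolynomial.ext _ _ fun α => ?_
  simpa using (mem_pow_idealOfVars_iff' _ _).1 (hmem (α.degree + 1) i) α (Nat.lt_succ_self _)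

end MvPolynomial

theorem restrictBlocks_apply {k : Type*} [CommRing k] {n : ℕ} {c : Fin (n + 1) → ℕ}
    (J : Ideal k) (f : MvPolynomial (BlockIdx n c) k) :
    restrictBlocks n c J f
      = map (Ideal.Quotient.mk J) (constantCoeff (splitVars (fun s => s.1 = 0) k f)) := by
  suffices h : restrictBlocks n c J = (map (Ideal.Quotient.mk J)).comp
      (constantCoeff.comp (splitVars (fun s : BlockIdx n c => s.1 = 0) k).toRingHom) from
    congr($h f)
  refine ringHom_ext (fun r => by simp [restrictBlocks]) fun s => ?_
  by_cases h : s.1 = 0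
  · simp [restrictBlocks, h, splitVars_X_of_pos (p := fun s : BlockIdx n c => s.1 = 0) h]
  · simp [restrictBlocks, h, splitVars_X_of_neg (p := fun s : BlockIdx n c => s.1 = 0) h]

theorem assertion_2_18_general (k : Type*) [CommRing k]
    (n : ℕ) (c : Fin (n + 1) → ℕ)
    (a : Fin (n + 1) → ℕ) (ha : StrictMono a)
    (V : Submodule k (MvPolynomial (BlockIdx n c) k))
    (hnd : ∀ (J : Ideal k) (b : ℕ), 0 < b →
      ∀ der : Derivation (k ⧸ J) (MvPolynomial {s : BlockIdx n c // s.1 ≠ 0} (k ⧸ J))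
          (MvPolynomial {s : BlockIdx n c // s.1 ≠ 0} (k ⧸ J)),
        DerivationHasWt (fun t : {s : BlockIdx n c // s.1 ≠ 0} => (a t.1.1 : ℤ)) (b : ℤ) der →
        (∀ f ∈ V, der (restrictBlocks n c J f) = 0) → der = 0) :
    ∀ b b' : ℕ, 0 < b → 0 < b' →
      ∀ der₁ der₂ :
          Derivation k (MvPolynomial (BlockIdx n c) k) (MvPolynomial (BlockIdx n c) k),
        DerivationHasWt (blockWt a) (b : ℤ) der₁ →
        DerivationHasWt (blockWt a) (b' : ℤ) der₂ →
        (∀ f ∈ V, der₁ f = 0) → (∀ f ∈ V, der₂ f = 0) →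
        ⁅der₁, der₂⁆ = 0 := by
  intro b b' hb hb' der₁ der₂ hwt₁ hwt₂ hV₁ hV₂
  have hwt : DerivationHasWt (blockWt a) ((b + b' : ℕ) : ℤ) ⁅der₁, der₂⁆ := by
    push_cast
    exact hwt₁.lie hwt₂
  have hmin : ∀ s t : BlockIdx n c, s.1 = 0 → blockWt a s ≤ blockWt a t := fun s t hs => by
    simpa [blockWt, hs] using ha.monotone (Fin.zero_le t.1)
  refine hwt.eq_zero_of_nondegenerateRestriction (p := fun s => s.1 = 0) (S := V) (w₀ := a 0)
    (Ideal.Quotient.mk ⊥) ?_ ?_ ?_ (by omega) ?_ ?_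
  · exact (RingHom.injective_iff_ker_eq_bot _).2 Ideal.mk_ker
  · intro e he G hG hGV
    exact hnd ⊥ e he G hG fun f hf => by rw [restrictBlocks_apply]; exact hGV f hf
  · intro s hs
    simp [blockWt, hs]
  · intro s hs
    exact hwt₁.lie_apply_X_eq_zero hwt₂ (by omega) (by omega) (fun t => by simp [blockWt])
      (hmin s · hs)
  · intro f hf
    simp [Derivation.commutator_apply, hV₁ f hf, hV₂ f hf]

/-- **Paper's assertion (2.18)**: the Lie algebra `L = ∐_{b>0} L_{-b}(V_d)` is abelian (and
concentrated in weight `-a 0`).  Under the nondegeneracy hypothesis II.c, if `∂` and `D` are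
`k`-derivations of weights `-b` and `-b'` (`b, b' > 0`) both vanishing on `V_d`, then their
commutator `⁅∂, D⁆ = ∂ ∘ D - D ∘ ∂` is the zero derivation. -/
theorem assertion_2_18 (k : Type*) [CommRing k] [CharZero k]
    (n : ℕ) (c : Fin (n + 1) → ℕ) (hc : ∀ i, 1 ≤ c i)
    (a : Fin (n + 1) → ℕ) (ha : StrictMono a) (ha0 : 0 < a 0)
    (d : ℕ)
    (V : Submodule k (MvPolynomial (BlockIdx n c) k))
    (hV : ∀ f ∈ V, MvPolynomial.IsWeightedHomogeneous (blockWt a) f (d : ℤ))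
    (hnd : ∀ (J : Ideal k) (b : ℕ), 0 < b →
      ∀ der : Derivation (k ⧸ J) (MvPolynomial {s : BlockIdx n c // s.1 ≠ 0} (k ⧸ J))
          (MvPolynomial {s : BlockIdx n c // s.1 ≠ 0} (k ⧸ J)),
        DerivationHasWt (fun t : {s : BlockIdx n c // s.1 ≠ 0} => (a t.1.1 : ℤ)) (b : ℤ) der →
        (∀ f ∈ V, der (restrictBlocks n c J f) = 0) → der = 0) :
    ∀ b b' : ℕ, 0 < b → 0 < b' →
      ∀ der₁ der₂ :
          Derivation k (MvPolynomial (BlockIdx n c) k) (MvPolynomial (BlockIdx n c) k),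
        DerivationHasWt (blockWt a) (b : ℤ) der₁ →
        DerivationHasWt (blockWt a) (b' : ℤ) der₂ →
        (∀ f ∈ V, der₁ f = 0) → (∀ f ∈ V, der₂ f = 0) →
        ⁅der₁, der₂⁆ = 0 :=
  assertion_2_18_general k n c a ha V hnd
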